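/- Let g ∈ E^{ef} be an edge that is not parallel to e and not parallel to f (ends(g) ≠ ends(e) and ends(g) ≠ ends(f)). Let G/g be the multigraph whose vertex type is the quotient of V identifying the two endpoints of g, whose edge type is E ∖ {g}, and whose endpoint map is the composition of ends with the quotient map. For every exponent vector λ : E → ℕ with λ(g) = 2: (i) the coefficient of x^λ in D computed for G equals the coefficient of x^{λ restricted to E∖{g}} in D computed for G/g (both coefficients lying in ℤ[q]); and (ii) the coefficient of x^λ in the combinatorial sum S computed for G equals the coefficient of x^{λ restricted to E∖{g}} in S computed for G/g. -/

import Mathlib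

open Finset

section Defs

variable {V : Type*} {E : Type*}

/-- The graph on vertex set `V` whose adjacency is given by the edges in `F`
(a loop joins nothing). -/
def etaGraph (ends : E → Sym2 V) (F : Finset E) : SimpleGraph V where
  Adj v w := v ≠ w ∧ ∃ g ∈ F, ends g = s(v, w)
  symm := by
    constructor
    rintro v w ⟨hvw, g, hg, hends⟩
    exact ⟨hvw.symm, g, hg, by rw [hends, Sym2.eq_swap]⟩
  loopless := by constructor; rintro v ⟨h, -⟩; exact h rfl

/-- `k(F)`: the number of connected components of `η(F)`. -/
noncomputable def kComp (ends : E → Sym2 V) (F : Finset E) : ℕ :=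
  Nat.card (etaGraph ends F).ConnectedComponent

/-- The edge with endpoint pair `s` joins the connected component of `a`
with that of `b` in the graph `G`. -/
def Joins (G : SimpleGraph V) (s : Sym2 V) (a b : V) : Prop :=
  ∃ u v : V, s = s(u, v) ∧ G.Reachable a u ∧ G.Reachable b v

/-- `F ⊆ E^{ef}` is a paracel if `e` and `f` each join the same two distinct
connected components of `η(F)`. -/
def IsParacel (ends : E → Sym2 V) (e f : E) (F : Finset E) : Prop :=
  e ∉ F ∧ f ∉ F ∧ ∃ a b : V,
    ¬ (etaGraph ends F).Reachable a b ∧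
    Joins (etaGraph ends F) (ends e) a b ∧
    Joins (etaGraph ends F) (ends f) a b

/-- `g ∈ E^{ef} ∖ F` is a smoot for the paracel `F` if it joins the same two
connected components of `η(F)` as `e` and `f` do. -/
def IsSmoot (ends : E → Sym2 V) (e f : E) (F : Finset E) (g : E) : Prop :=
  g ∉ F ∧ g ≠ e ∧ g ≠ f ∧ ∃ a b : V,
    ¬ (etaGraph ends F).Reachable a b ∧
    Joins (etaGraph ends F) (ends e) a b ∧
    Joins (etaGraph ends F) (ends f) a b ∧
    Joins (etaGraph ends F) (ends g) a b

variable [DecidableEq E]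

/-- `α` is compatible with `(β, γ)`. -/
def Compatible (ends : E → Sym2 V) (e f : E) (β γ α : Finset E) : Prop :=
  e ∉ α ∧ f ∉ α ∧ Disjoint α β ∧ Disjoint α γ ∧
    IsParacel ends e f (γ ∪ α) ∧ ∀ g ∈ β, IsSmoot ends e f (γ ∪ α) g

/-- indicator function of a finite edge set, as an exponent vector. -/
def indic (A : Finset E) : E → ℕ := fun g => if g ∈ A then 1 else 0

/-- `B_{β,γ}` as a set of exponent vectors `1_α + 1_{α'}` for twins `α, α'`. -/
def Bset (ends : E → Sym2 V) (e f : E) (β γ : Finset E) : Set (E → ℕ) :=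
  { d | ∃ α α' : Finset E,
      Compatible ends e f β γ α ∧ Compatible ends e f β γ α' ∧
      Compatible ends e f β γ (α ∩ α') ∧ d = indic α + indic α' }

/-- `x^F = ∏_{g ∈ F} x_g`. -/
noncomputable def xF (A : Finset E) : MvPolynomial E ℤ := ∏ g ∈ A, MvPolynomial.X g

variable [Fintype E]

/-- `E^{ef} = E ∖ {e, f}`. -/
def Eef (e f : E) : Finset E := Finset.univ \ {e, f}

/-- `x^d = ∏_g x_g^{d g}` for an exponent vector `d`. -/
noncomputable def xPow (d : E → ℕ) : MvPolynomial E ℤ := ∏ g : E, MvPolynomial.X g ^ d g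

/-- `B_{β,γ}` as a finite set of exponent vectors, each counted once. -/
noncomputable def Bfin (ends : E → Sym2 V) (e f : E) (β γ : Finset E) :
    Finset (E → ℕ) := by
  classical
  exact (Finset.univ.filter (fun p : Finset E × Finset E =>
      Compatible ends e f β γ p.1 ∧ Compatible ends e f β γ p.2 ∧
      Compatible ends e f β γ (p.1 ∩ p.2))).image fun p => indic p.1 + indic p.2

/-- `T_A^B = Σ_{A ⊆ F, F ∩ B = ∅} x^F q^{k(F)}` in `R = (MvPolynomial E ℤ)[q]`. -/
noncomputable def Tab (ends : E → Sym2 V) (A B : Finset E) :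
    Polynomial (MvPolynomial E ℤ) :=
  ∑ F ∈ Finset.univ.filter (fun F : Finset E => A ⊆ F ∧ F ∩ B = ∅),
    Polynomial.C (xF F) * Polynomial.X ^ kComp ends F

/-- `D = T_e^f T_f^e − T_{ef} T^{ef}`. -/
noncomputable def Dpoly (ends : E → Sym2 V) (e f : E) :
    Polynomial (MvPolynomial E ℤ) :=
  Tab ends {e} {f} * Tab ends {f} {e} - Tab ends {e, f} ∅ * Tab ends ∅ {e, f}

/-- The combinatorial sum
`S = Σ_{(β,γ) disjoint ⊆ E^{ef}} x^β x^γ Σ_{d ∈ B_{β,γ}} x^d`. -/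
noncomputable def Ssum (ends : E → Sym2 V) (e f : E) : MvPolynomial E ℤ := by
  classical
  exact ∑ p ∈ Finset.univ.filter (fun p : Finset E × Finset E =>
      p.1 ⊆ Eef e f ∧ p.2 ⊆ Eef e f ∧ Disjoint p.1 p.2),
    xF p.1 * xF p.2 * ∑ d ∈ Bfin ends e f p.1 p.2, xPow d

/-- `k₁(A,B) = k(A+e) + k(B+f)`. -/
noncomputable def kOne (ends : E → Sym2 V) (e f : E) (A B : Finset E) : ℕ :=
  kComp ends (insert e A) + kComp ends (insert f B)

/-- `k₂(A,B) = k(A+e+f) + k(B)`. -/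
noncomputable def kTwo (ends : E → Sym2 V) (e f : E) (A B : Finset E) : ℕ :=
  kComp ends (insert f (insert e A)) + kComp ends B

/-- The coefficient of the monomial `x^lam` in an element of
`(MvPolynomial E ℤ)[q]`, as an element of `ℤ[q]`. -/
noncomputable def monCoeff (P : Polynomial (MvPolynomial E ℤ)) (lam : E →₀ ℕ) :
    Polynomial ℤ :=
  P.sum fun n c => Polynomial.C (MvPolynomial.coeff lam c) * Polynomial.X ^ n

end Defs
section Contract

variable {V E : Type*} [DecidableEq E]

variable (ends : E → Sym2 V) (g : E)

/-- quotient map contracting edge `g`. -/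
abbrev cq : V → Quot (fun a b : V => ends g = s(a, b)) := Quot.mk _

/-- endpoint map of the contracted graph. -/
abbrev cends : {h : E // h ≠ g} → Sym2 (Quot fun a b : V => ends g = s(a, b)) :=
  fun h => Sym2.map (Quot.mk _) (ends h.1)

/-- pushing a finset of edges down to the contracted edge type. -/
def edown (F : Finset E) : Finset {h : E // h ≠ g} := F.subtype _

variable {ends g}

/-- lifting a finset of contracted edges up. -/
def eup (F' : Finset {h : E // h ≠ g}) : Finset E :=
  F'.map (Function.Embedding.subtype _)

@[simp] lemma mem_edown {F : Finset E} {h : {h : E // h ≠ g}} :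
    h ∈ edown g F ↔ h.1 ∈ F := Finset.mem_subtype

@[simp] lemma mem_eup {F' : Finset {h : E // h ≠ g}} {h : E} :
    h ∈ eup F' ↔ ∃ hh : h ≠ g, ⟨h, hh⟩ ∈ F' := by
  simp only [eup, Finset.mem_map, Function.Embedding.coe_subtype]
  constructor
  · rintro ⟨⟨a, ha2⟩, ha, rfl⟩; exact ⟨ha2, ha⟩
  · rintro ⟨hh, h2⟩; exact ⟨⟨h, hh⟩, h2, rfl⟩

lemma edown_eup (F' : Finset {h : E // h ≠ g}) : edown g (eup F') = F' := by
  ext ⟨h, hh⟩; simp [hh]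

lemma edown_insert_eup (F' : Finset {h : E // h ≠ g}) :
    edown g (insert g (eup F')) = F' := by
  ext ⟨h, hh⟩; simp [hh]

lemma insert_eup_edown {F : Finset E} (hg : g ∈ F) :
    insert g (eup (edown g F)) = F := by
  ext h
  by_cases hh : h = g <;> simp [hh, hg]

lemma eup_edown {F : Finset E} (hg : g ∉ F) :
    eup (edown g F) = F := by
  ext h
  by_cases hh : h = g
  · subst hh; simp [hg]
  · simp [hh]

lemma edown_union (A B : Finset E) :
    edown g (A ∪ B) = edown g A ∪ edown g B := by
  ext ⟨h, hh⟩; simp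

lemma edown_inter (A B : Finset E) :
    edown g (A ∩ B) = edown g A ∩ edown g B := by
  ext ⟨h, hh⟩; simp

lemma edown_subset_iff {A F : Finset E} (hA : g ∉ A) :
    A ⊆ F ↔ edown g A ⊆ edown g F := by
  constructor
  · intro hs x hx; simp only [mem_edown] at *; exact hs hx
  · intro hs h hh
    have hne : h ≠ g := fun e => hA (e ▸ hh)
    have := hs (show (⟨h, hne⟩ : {h : E // h ≠ g}) ∈ edown g A by simpa)
    simpa using this

lemma edown_disjoint_iff {A B : Finset E} (hB : g ∉ B) :
    Disjoint A B ↔ Disjoint (edown g A) (edown g B) := by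
  constructor
  · intro hd
    rw [Finset.disjoint_left] at *
    rintro ⟨h, hh⟩ h1 h2
    simp only [mem_edown] at h1 h2
    exact hd h1 h2
  · intro hd
    rw [Finset.disjoint_left] at *
    intro h h1 h2
    have hne : h ≠ g := fun e => hB (e ▸ h2)
    exact hd (show (⟨h, hne⟩ : {h : E // h ≠ g}) ∈ edown g A by simpa)
      (by simpa)

lemma edown_eq_empty_iff {A : Finset E} (hA : g ∉ A) :
    A = ∅ ↔ edown g A = ∅ := by
  constructor
  · rintro rfl; rfl
  · intro h
    ext x
    simp only [Finset.notMem_empty, iff_false]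
    intro hx
    have hne : x ≠ g := fun e => hA (e ▸ hx)
    have : (⟨x, hne⟩ : {h : E // h ≠ g}) ∈ edown g A := by simpa
    simp [h] at this

end Contract
section ContractGraph

set_option linter.unusedSectionVars false

variable {V E : Type*} [DecidableEq E]
variable {ends : E → Sym2 V} {g : E}

lemma reach_of_cq_eq {F : Finset E} (hgF : g ∈ F) {a b : V}
    (h : cq ends g a = cq ends g b) : (etaGraph ends F).Reachable a b := by
  rw [Quot.eq] at h
  induction h with
  | rel x y hxy =>
      by_cases hxy' : x = y
      · subst hxy'; exact SimpleGraph.Reachable.refl _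
      · exact SimpleGraph.Adj.reachable ⟨hxy', g, hgF, hxy⟩
  | refl x => exact SimpleGraph.Reachable.refl _
  | symm x y _ ih => exact ih.symm
  | trans x y z _ _ ih1 ih2 => exact ih1.trans ih2

lemma reach_cq_of_adj {F : Finset E} {u v : V}
    (h : (etaGraph ends F).Adj u v) :
    (etaGraph (cends ends g) (edown g F)).Reachable (cq ends g u) (cq ends g v) := by
  obtain ⟨huv, h', hF, hends⟩ := h
  by_cases hq : cq ends g u = cq ends g v
  · rw [hq]
  · by_cases hgh : h' = g
    · exact absurd (Quot.sound (hgh ▸ hends)) hq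
    · exact SimpleGraph.Adj.reachable
        ⟨hq, ⟨h', hgh⟩, by simpa using hF,
          by show Sym2.map (cq ends g) (ends h') = _; rw [hends]; rfl⟩

lemma reach_iff_contract {F : Finset E} (hgF : g ∈ F) {a b : V} :
    (etaGraph ends F).Reachable a b ↔
      (etaGraph (cends ends g) (edown g F)).Reachable (cq ends g a) (cq ends g b) := by
  constructor
  · intro h
    obtain ⟨w⟩ := h
    induction w with
    | nil => exact SimpleGraph.Reachable.refl _
    | cons hadj _ ih => exact (reach_cq_of_adj hadj).trans ih
  · intro h
    suffices H : ∀ x y : Quot (fun a b : V => ends g = s(a, b)),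
        (etaGraph (cends ends g) (edown g F)).Reachable x y →
        ∀ a b : V, cq ends g a = x → cq ends g b = y →
          (etaGraph ends F).Reachable a b by
      exact H _ _ h a b rfl rfl
    intro x y hxy
    obtain ⟨w⟩ := hxy
    induction w with
    | nil =>
        intro a b ha hb
        exact reach_of_cq_eq hgF (ha.trans hb.symm)
    | @cons x m y hadj w ih =>
        intro a b ha hb
        obtain ⟨hxm, ⟨h', hgh⟩, hmem, hends'⟩ := hadj
        obtain ⟨u, v, huv⟩ : ∃ u v : V, ends h' = s(u, v) :=
          Sym2.ind (fun u v => ⟨u, v, rfl⟩) (ends h')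
        have hmap : s(cq ends g u, cq ends g v) = s(x, m) := by
          have : cends ends g ⟨h', hgh⟩ = Sym2.map (cq ends g) (ends h') := rfl
          rw [this, huv] at hends'
          exact hends'
        have hF' : h' ∈ F := by simpa using hmem
        have huvreach : (etaGraph ends F).Reachable u v := by
          by_cases huv' : u = v
          · subst huv'; exact SimpleGraph.Reachable.refl _
          · exact SimpleGraph.Adj.reachable ⟨huv', h', hF', huv⟩
        rw [Sym2.eq_iff] at hmap
        rcases hmap with ⟨h1, h2⟩ | ⟨h1, h2⟩
        · exact ((reach_of_cq_eq hgF (ha.trans h1.symm)).trans huvreach).trans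
            (ih v b h2 hb)
        · exact ((reach_of_cq_eq hgF (ha.trans h2.symm)).trans huvreach.symm).trans
            (ih u b h1 hb)

lemma kComp_contract {F : Finset E} (hgF : g ∈ F) :
    kComp ends F = kComp (cends ends g) (edown g F) := by
  classical
  apply Nat.card_eq_of_bijective
    (SimpleGraph.ConnectedComponent.lift
      (fun v => (etaGraph (cends ends g) (edown g F)).connectedComponentMk (cq ends g v))
      (fun v w p _ => SimpleGraph.ConnectedComponent.sound
        ((reach_iff_contract hgF).1 ⟨p⟩)))
  constructor
  · intro c₁ c₂
    refine SimpleGraph.ConnectedComponent.ind₂ (fun a b h => ?_) c₁ c₂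
    simp only [SimpleGraph.ConnectedComponent.lift_mk] at h
    exact SimpleGraph.ConnectedComponent.sound
      ((reach_iff_contract hgF).2 (SimpleGraph.ConnectedComponent.exact h))
  · intro c'
    refine SimpleGraph.ConnectedComponent.ind (fun x => ?_) c'
    obtain ⟨a, rfl⟩ := Quot.exists_rep x
    exact ⟨(etaGraph ends F).connectedComponentMk a, rfl⟩

lemma joins_iff_contract {F : Finset E} (hgF : g ∈ F) {s : Sym2 V} {a b : V} :
    Joins (etaGraph ends F) s a b ↔
      Joins (etaGraph (cends ends g) (edown g F)) (Sym2.map (cq ends g) s)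
        (cq ends g a) (cq ends g b) := by
  constructor
  · rintro ⟨u, v, hs, ra, rb⟩
    exact ⟨cq ends g u, cq ends g v, by rw [hs]; exact (Sym2.map_pair_eq _ _ _).symm,
      (reach_iff_contract hgF).1 ra, (reach_iff_contract hgF).1 rb⟩
  · rintro ⟨u', v', hs, ra, rb⟩
    obtain ⟨u, v, huv⟩ : ∃ u v : V, s = s(u, v) :=
      Sym2.ind (fun u v => ⟨u, v, rfl⟩) s
    rw [huv] at hs
    simp only [Sym2.map_pair_eq] at hs
    rw [Sym2.eq_iff] at hs
    rcases hs with ⟨h1, h2⟩ | ⟨h1, h2⟩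
    · exact ⟨u, v, huv, (reach_iff_contract hgF).2 (h1 ▸ ra),
        (reach_iff_contract hgF).2 (h2 ▸ rb)⟩
    · exact ⟨v, u, huv.trans (Sym2.eq_swap), (reach_iff_contract hgF).2 (h2 ▸ ra),
        (reach_iff_contract hgF).2 (h1 ▸ rb)⟩

end ContractGraph
section ContractStruct

set_option linter.unusedSectionVars false

variable {V E : Type*} [DecidableEq E]
variable {ends : E → Sym2 V} {g : E}

lemma paracel_iff_contract {e f : E} (hge : e ≠ g) (hgf : f ≠ g)
    {F : Finset E} (hgF : g ∈ F) :
    IsParacel ends e f F ↔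
      IsParacel (cends ends g) ⟨e, hge⟩ ⟨f, hgf⟩ (edown g F) := by
  unfold IsParacel
  constructor
  · rintro ⟨he, hf, a, b, hnr, hje, hjf⟩
    refine ⟨by simpa using he, by simpa using hf, cq ends g a, cq ends g b,
      fun hr => hnr ((reach_iff_contract hgF).2 hr), ?_, ?_⟩
    · exact (joins_iff_contract hgF).1 hje
    · exact (joins_iff_contract hgF).1 hjf
  · rintro ⟨he, hf, a', b', hnr, hje, hjf⟩
    obtain ⟨a, rfl⟩ := Quot.exists_rep a'
    obtain ⟨b, rfl⟩ := Quot.exists_rep b'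
    refine ⟨by simpa using he, by simpa using hf, a, b,
      fun hr => hnr ((reach_iff_contract hgF).1 hr),
      (joins_iff_contract hgF).2 hje, (joins_iff_contract hgF).2 hjf⟩

lemma smoot_iff_contract {e f h : E} (hge : e ≠ g) (hgf : f ≠ g) (hgh : h ≠ g)
    {F : Finset E} (hgF : g ∈ F) :
    IsSmoot ends e f F h ↔
      IsSmoot (cends ends g) ⟨e, hge⟩ ⟨f, hgf⟩ (edown g F) ⟨h, hgh⟩ := by
  unfold IsSmoot
  constructor
  · rintro ⟨hmem, hne, hnf, a, b, hnr, hje, hjf, hjh⟩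
    exact ⟨by simpa using hmem, by simpa [Subtype.ext_iff] using hne,
      by simpa [Subtype.ext_iff] using hnf, cq ends g a, cq ends g b,
      fun hr => hnr ((reach_iff_contract hgF).2 hr),
      (joins_iff_contract hgF).1 hje, (joins_iff_contract hgF).1 hjf,
      (joins_iff_contract hgF).1 hjh⟩
  · rintro ⟨hmem, hne, hnf, a', b', hnr, hje, hjf, hjh⟩
    obtain ⟨a, rfl⟩ := Quot.exists_rep a'
    obtain ⟨b, rfl⟩ := Quot.exists_rep b'
    exact ⟨by simpa using hmem, by simpa [Subtype.ext_iff] using hne,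
      by simpa [Subtype.ext_iff] using hnf, a, b,
      fun hr => hnr ((reach_iff_contract hgF).1 hr),
      (joins_iff_contract hgF).2 hje, (joins_iff_contract hgF).2 hjf,
      (joins_iff_contract hgF).2 hjh⟩

lemma compatible_iff_contract {e f : E} (hge : e ≠ g) (hgf : f ≠ g)
    {β γ α : Finset E} (hβ : g ∉ β) (hγ : g ∉ γ) (hα : g ∈ α) :
    Compatible ends e f β γ α ↔
      Compatible (cends ends g) ⟨e, hge⟩ ⟨f, hgf⟩ (edown g β) (edown g γ)
        (edown g α) := by
  have hgγα : g ∈ γ ∪ α := Finset.mem_union_right _ hα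
  unfold Compatible
  rw [← edown_union]
  constructor
  · rintro ⟨he, hf, hdβ, hdγ, hpar, hsm⟩
    refine ⟨by simpa using he, by simpa using hf,
      (edown_disjoint_iff hβ).1 hdβ, (edown_disjoint_iff hγ).1 hdγ,
      (paracel_iff_contract hge hgf hgγα).1 hpar, ?_⟩
    rintro ⟨h, hgh⟩ hmem
    exact (smoot_iff_contract hge hgf hgh hgγα).1 (hsm h (by simpa using hmem))
  · rintro ⟨he, hf, hdβ, hdγ, hpar, hsm⟩
    refine ⟨by simpa using he, by simpa using hf,
      (edown_disjoint_iff hβ).2 hdβ, (edown_disjoint_iff hγ).2 hdγ,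
      (paracel_iff_contract hge hgf hgγα).2 hpar, ?_⟩
    intro h hmem
    have hgh : h ≠ g := fun hh => hβ (hh ▸ hmem)
    exact (smoot_iff_contract hge hgf hgh hgγα).2
      (hsm ⟨h, hgh⟩ (by simpa using hmem))

end ContractStruct
section Alg

set_option linter.unusedSectionVars false

variable {E : Type*} [DecidableEq E] [Fintype E]

lemma indic_apply (A : Finset E) (h : E) : indic A h = if h ∈ A then 1 else 0 := rfl

lemma xF_eq_monomial (F : Finset E) :
    xF F = MvPolynomial.monomial (R := ℤ)
      (Finsupp.equivFunOnFinite.symm (indic F)) 1 := by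
  classical
  induction F using Finset.induction_on with
  | empty =>
      have : (Finsupp.equivFunOnFinite.symm (indic (∅ : Finset E))) = 0 := by
        ext h; simp [indic]
      simp [xF, this]
  | @insert a s ha ih =>
      rw [xF, Finset.prod_insert ha, ← xF, ih]
      have hX : (MvPolynomial.X a : MvPolynomial E ℤ) =
          MvPolynomial.monomial (Finsupp.single a 1) 1 := by
        rw [← MvPolynomial.X_pow_eq_monomial]; ring
      rw [hX, MvPolynomial.monomial_mul, one_mul]
      have heq : Finsupp.single a 1 + Finsupp.equivFunOnFinite.symm (indic s) =
          Finsupp.equivFunOnFinite.symm (indic (insert a s)) := by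
        ext h
        rw [Finsupp.add_apply, Finsupp.coe_equivFunOnFinite_symm,
          Finsupp.coe_equivFunOnFinite_symm, Finsupp.single_apply]
        by_cases hh : h = a
        · subst hh; simp [indic, ha]
        · simp [indic, hh, Ne.symm hh]
      rw [heq]

lemma xPow_eq_monomial (d : E → ℕ) :
    xPow d = MvPolynomial.monomial (R := ℤ) (Finsupp.equivFunOnFinite.symm d) 1 := by
  classical
  rw [xPow]
  have : ∀ h : E, (MvPolynomial.X h : MvPolynomial E ℤ) ^ d h =
      MvPolynomial.monomial (Finsupp.single h (d h)) 1 :=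
    fun h => MvPolynomial.X_pow_eq_monomial
  simp_rw [this]
  have heq : Finsupp.equivFunOnFinite.symm d =
      ∑ h : E, Finsupp.single h (d h) := by
    ext a
    rw [Finsupp.coe_equivFunOnFinite_symm, Finsupp.finset_sum_apply]
    simp [Finsupp.single_apply]
  rw [heq, MvPolynomial.monomial_sum_index]
  simp

lemma monCoeff_add (lam : E →₀ ℕ) (P Q : Polynomial (MvPolynomial E ℤ)) :
    monCoeff (P + Q) lam = monCoeff P lam + monCoeff Q lam := by
  unfold monCoeff
  rw [Polynomial.sum_add_index]
  · intro i; simp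
  · intro a b₁ b₂; rw [MvPolynomial.coeff_add, map_add, add_mul]

/-- `monCoeff` as an additive hom. -/
noncomputable def monCoeffHom (lam : E →₀ ℕ) :
    Polynomial (MvPolynomial E ℤ) →+ Polynomial ℤ :=
  AddMonoidHom.mk' (fun P => monCoeff P lam) (fun P Q => monCoeff_add lam P Q)

lemma monCoeff_C_mul_X_pow (lam : E →₀ ℕ) (c : MvPolynomial E ℤ) (n : ℕ) :
    monCoeff (Polynomial.C c * Polynomial.X ^ n) lam =
      Polynomial.C (MvPolynomial.coeff lam c) * Polynomial.X ^ n := by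
  unfold monCoeff
  rw [Polynomial.C_mul_X_pow_eq_monomial, Polynomial.sum_monomial_index]
  simp

end Alg
section TabTransfer

set_option linter.unusedSectionVars false
set_option maxHeartbeats 1000000

variable {V E : Type*} [DecidableEq E] [Fintype E]

open scoped Classical in
lemma monCoeff_tab_mul (ends : E → Sym2 V) (A B A' B' : Finset E) (lam : E →₀ ℕ) :
    monCoeff (Tab ends A B * Tab ends A' B') lam =
      ∑ p ∈ ((Finset.univ.filter (fun F : Finset E => A ⊆ F ∧ F ∩ B = ∅)) ×ˢ
             (Finset.univ.filter (fun F : Finset E => A' ⊆ F ∧ F ∩ B' = ∅))).filter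
             (fun p => Finsupp.equivFunOnFinite.symm (indic p.1) +
                        Finsupp.equivFunOnFinite.symm (indic p.2) = lam),
        (Polynomial.X : Polynomial ℤ) ^ (kComp ends p.1 + kComp ends p.2) := by
  rw [Finset.sum_filter, Finset.sum_product]
  unfold Tab
  rw [Finset.sum_mul_sum]
  have : ∀ P, monCoeff P lam = monCoeffHom lam P := fun _ => rfl
  rw [this, map_sum]
  refine Finset.sum_congr rfl (fun F₁ _ => ?_)
  rw [map_sum]
  refine Finset.sum_congr rfl (fun F₂ _ => ?_)
  have hterm : (Polynomial.C (xF F₁) * Polynomial.X ^ kComp ends F₁) *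
      (Polynomial.C (xF F₂) * Polynomial.X ^ kComp ends F₂) =
      Polynomial.C (xF F₁ * xF F₂) * Polynomial.X ^ (kComp ends F₁ + kComp ends F₂) := by
    rw [map_mul, pow_add]; ring
  show monCoeffHom lam _ = _
  rw [hterm]
  show monCoeff _ _ = _
  rw [monCoeff_C_mul_X_pow, xF_eq_monomial, xF_eq_monomial, MvPolynomial.monomial_mul,
    one_mul, MvPolynomial.coeff_monomial]
  split <;> simp

lemma indic_sum_iff {F₁ F₂ : Finset E} {lam : E → ℕ} :
    Finsupp.equivFunOnFinite.symm (indic F₁) + Finsupp.equivFunOnFinite.symm (indic F₂)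
      = Finsupp.equivFunOnFinite.symm lam ↔
    ∀ h : E, indic F₁ h + indic F₂ h = lam h := by
  rw [Finsupp.ext_iff]
  refine forall_congr' (fun h => ?_)
  rw [Finsupp.add_apply, Finsupp.coe_equivFunOnFinite_symm,
    Finsupp.coe_equivFunOnFinite_symm, Finsupp.coe_equivFunOnFinite_symm]

lemma indic_edown {g : E} (F : Finset E) (h : {h : E // h ≠ g}) :
    indic (edown g F) h = indic F h.1 := by
  simp [indic_apply]

open scoped Classical in
lemma monCoeff_tab_mul_contract {ends : E → Sym2 V} {g : E}
    {A B A' B' : Finset E} (hA : g ∉ A) (hB : g ∉ B) (hA' : g ∉ A') (hB' : g ∉ B')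
    {lam : E → ℕ} (hlam : lam g = 2) :
    monCoeff (Tab ends A B * Tab ends A' B') (Finsupp.equivFunOnFinite.symm lam) =
      monCoeff (Tab (cends ends g) (edown g A) (edown g B) *
          Tab (cends ends g) (edown g A') (edown g B'))
        (Finsupp.equivFunOnFinite.symm (fun h : {h : E // h ≠ g} => lam h.1)) := by
  rw [monCoeff_tab_mul, monCoeff_tab_mul]
  refine Finset.sum_nbij' (fun p => (edown g p.1, edown g p.2))
    (fun p => (insert g (eup p.1), insert g (eup p.2))) ?_ ?_ ?_ ?_ ?_
  · rintro ⟨F₁, F₂⟩ hp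
    simp only [Finset.mem_filter, Finset.mem_product, Finset.mem_univ, true_and] at hp
    obtain ⟨⟨h₁, h₂⟩, hcond⟩ := hp
    rw [indic_sum_iff] at hcond
    refine Finset.mem_filter.mpr ⟨Finset.mem_product.mpr ⟨?_, ?_⟩, ?_⟩
    · refine Finset.mem_filter.mpr ⟨Finset.mem_univ _, (edown_subset_iff hA).1 h₁.1, ?_⟩
      rw [← edown_inter, ← edown_eq_empty_iff (fun hgi => hB (Finset.mem_of_mem_inter_right hgi))]
      exact h₁.2
    · refine Finset.mem_filter.mpr ⟨Finset.mem_univ _, (edown_subset_iff hA').1 h₂.1, ?_⟩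
      rw [← edown_inter, ← edown_eq_empty_iff (fun hgi => hB' (Finset.mem_of_mem_inter_right hgi))]
      exact h₂.2
    · rw [indic_sum_iff]
      intro h
      rw [indic_edown, indic_edown]
      exact hcond h.1
  · rintro ⟨F₁', F₂'⟩ hp
    simp only [Finset.mem_filter, Finset.mem_product, Finset.mem_univ, true_and] at hp
    obtain ⟨⟨h₁, h₂⟩, hcond⟩ := hp
    rw [indic_sum_iff] at hcond
    refine Finset.mem_filter.mpr ⟨Finset.mem_product.mpr ⟨?_, ?_⟩, ?_⟩
    · refine Finset.mem_filter.mpr ⟨Finset.mem_univ _, ?_, ?_⟩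
      · rw [edown_subset_iff hA, edown_insert_eup]; exact h₁.1
      · rw [edown_eq_empty_iff (fun hgi => hB (Finset.mem_of_mem_inter_right hgi)),
          edown_inter, edown_insert_eup]
        exact h₁.2
    · refine Finset.mem_filter.mpr ⟨Finset.mem_univ _, ?_, ?_⟩
      · rw [edown_subset_iff hA', edown_insert_eup]; exact h₂.1
      · rw [edown_eq_empty_iff (fun hgi => hB' (Finset.mem_of_mem_inter_right hgi)),
          edown_inter, edown_insert_eup]
        exact h₂.2
    · rw [indic_sum_iff]
      intro h
      by_cases hh : h = g
      · subst hh
        simp [indic_apply, hlam]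
      · have h1 : indic (insert g (eup F₁')) h = indic F₁' ⟨h, hh⟩ := by
          simp [indic_apply, hh]
        have h2 : indic (insert g (eup F₂')) h = indic F₂' ⟨h, hh⟩ := by
          simp [indic_apply, hh]
        rw [h1, h2]
        exact hcond ⟨h, hh⟩
  · rintro ⟨F₁, F₂⟩ hp
    simp only [Finset.mem_filter, Finset.mem_product] at hp
    rw [indic_sum_iff] at hp
    have hg₁ : g ∈ F₁ ∧ g ∈ F₂ := by
      have := hp.2 g
      rw [hlam] at this
      simp only [indic_apply] at this
      constructor <;> by_contra hc <;> rw [if_neg hc] at this <;> split at this <;> omega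
    simp only [Prod.mk.injEq]
    exact ⟨insert_eup_edown hg₁.1, insert_eup_edown hg₁.2⟩
  · rintro ⟨F₁', F₂'⟩ _
    simp only [Prod.mk.injEq]
    exact ⟨edown_insert_eup F₁', edown_insert_eup F₂'⟩
  · rintro ⟨F₁, F₂⟩ hp
    simp only [Finset.mem_filter, Finset.mem_product] at hp
    rw [indic_sum_iff] at hp
    have hg₁ : g ∈ F₁ ∧ g ∈ F₂ := by
      have := hp.2 g
      rw [hlam] at this
      simp only [indic_apply] at this
      constructor <;> by_contra hc <;> rw [if_neg hc] at this <;> split at this <;> omega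
    rw [kComp_contract hg₁.1, kComp_contract hg₁.2]

end TabTransfer
section DFinal

set_option linter.unusedSectionVars false

variable {V E : Type*} [DecidableEq E] [Fintype E]

lemma edown_singleton {g e : E} (hge : e ≠ g) :
    edown g ({e} : Finset E) = {(⟨e, hge⟩ : {h : E // h ≠ g})} := by
  ext ⟨h, hh⟩
  simp [Subtype.ext_iff]

lemma edown_pair {g e f : E} (hge : e ≠ g) (hgf : f ≠ g) :
    edown g ({e, f} : Finset E) = {(⟨e, hge⟩ : {h : E // h ≠ g}), ⟨f, hgf⟩} := by
  ext ⟨h, hh⟩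
  simp [Subtype.ext_iff]

lemma edown_empty (g : E) : edown g (∅ : Finset E) = ∅ := rfl

lemma monCoeff_sub (lam : E →₀ ℕ) (P Q : Polynomial (MvPolynomial E ℤ)) :
    monCoeff (P - Q) lam = monCoeff P lam - monCoeff Q lam :=
  map_sub (monCoeffHom lam) P Q

lemma dpoly_contract (ends : E → Sym2 V) (e f : E)
    (g : E) (hge : g ≠ e) (hgf : g ≠ f)
    (lam : E → ℕ) (hlam : lam g = 2) :
    monCoeff (Dpoly ends e f) (Finsupp.equivFunOnFinite.symm lam) =
      monCoeff (Dpoly (cends ends g) ⟨e, hge.symm⟩ ⟨f, hgf.symm⟩)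
        (Finsupp.equivFunOnFinite.symm fun h : {h : E // h ≠ g} => lam h.1) := by
  unfold Dpoly
  rw [monCoeff_sub, monCoeff_sub,
    monCoeff_tab_mul_contract (by simp [hge]) (by simp [hgf])
      (by simp [hgf]) (by simp [hge]) hlam,
    monCoeff_tab_mul_contract (by simp [hge, hgf]) (by simp)
      (by simp) (by simp [hge, hgf]) hlam,
    edown_singleton hge.symm, edown_singleton hgf.symm,
    edown_pair hge.symm hgf.symm, edown_empty]

end DFinal
section SsumCalc

set_option linter.unusedSectionVars false
set_option maxHeartbeats 1000000

variable {V E : Type*} [DecidableEq E] [Fintype E]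

lemma mem_Bfin {ends : E → Sym2 V} {e f : E} {β γ : Finset E} {d : E → ℕ} :
    d ∈ Bfin ends e f β γ ↔ ∃ α α' : Finset E,
      Compatible ends e f β γ α ∧ Compatible ends e f β γ α' ∧
      Compatible ends e f β γ (α ∩ α') ∧ d = indic α + indic α' := by
  classical
  unfold Bfin
  rw [Finset.mem_image]
  constructor
  · rintro ⟨⟨α, α'⟩, hmem, rfl⟩
    simp only [Finset.mem_filter, Finset.mem_univ, true_and] at hmem
    exact ⟨α, α', hmem.1, hmem.2.1, hmem.2.2, rfl⟩
  · rintro ⟨α, α', h1, h2, h3, rfl⟩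
    exact ⟨(α, α'), by simp [h1, h2, h3], rfl⟩

lemma indic3_sum_iff {β γ : Finset E} {d lam : E → ℕ} :
    Finsupp.equivFunOnFinite.symm (indic β) + Finsupp.equivFunOnFinite.symm (indic γ)
        + Finsupp.equivFunOnFinite.symm d = Finsupp.equivFunOnFinite.symm lam ↔
      ∀ h : E, indic β h + indic γ h + d h = lam h := by
  rw [Finsupp.ext_iff]
  refine forall_congr' (fun h => ?_)
  simp only [Finsupp.add_apply, Finsupp.coe_equivFunOnFinite_symm]

open scoped Classical in
lemma coeff_Ssum (ends : E → Sym2 V) (e f : E) (lam : E →₀ ℕ) :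
    MvPolynomial.coeff lam (Ssum ends e f) =
      ∑ p ∈ Finset.univ.filter (fun p : Finset E × Finset E =>
          p.1 ⊆ Eef e f ∧ p.2 ⊆ Eef e f ∧ Disjoint p.1 p.2),
        (((Bfin ends e f p.1 p.2).filter (fun d =>
            Finsupp.equivFunOnFinite.symm (indic p.1) +
            Finsupp.equivFunOnFinite.symm (indic p.2) +
            Finsupp.equivFunOnFinite.symm d = lam)).card : ℤ) := by
  unfold Ssum
  rw [MvPolynomial.coeff_sum]
  refine Finset.sum_congr rfl (fun p _ => ?_)
  rw [Finset.mul_sum, MvPolynomial.coeff_sum]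
  have hterm : ∀ d : E → ℕ, xF p.1 * xF p.2 * xPow d =
      MvPolynomial.monomial (Finsupp.equivFunOnFinite.symm (indic p.1) +
        Finsupp.equivFunOnFinite.symm (indic p.2) +
        Finsupp.equivFunOnFinite.symm d) 1 := by
    intro d
    rw [xF_eq_monomial, xF_eq_monomial, xPow_eq_monomial,
      MvPolynomial.monomial_mul, MvPolynomial.monomial_mul]
    norm_num
  simp_rw [hterm, MvPolynomial.coeff_monomial]
  rw [← Finset.sum_filter]
  simp [Finset.sum_const]

end SsumCalc
section STransfer

set_option linter.unusedSectionVars false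
set_option maxHeartbeats 1000000

variable {V E : Type*} [DecidableEq E] [Fintype E]

lemma indic_le_one (A : Finset E) (h : E) : indic A h ≤ 1 := by
  rw [indic_apply]; split <;> omega

lemma indic_eq_one_iff {A : Finset E} {h : E} : indic A h = 1 ↔ h ∈ A := by
  rw [indic_apply]; split <;> simp_all

lemma indic_eq_zero_of_not_mem {A : Finset E} {h : E} (hh : h ∉ A) : indic A h = 0 := by
  rw [indic_apply, if_neg hh]

open scoped Classical in
lemma Bfin_filter_empty {ends : E → Sym2 V} {e f g : E} {β γ : Finset E}
    {lam : E → ℕ} (hlam : lam g = 2) (hβγ : Disjoint β γ) (hg : g ∈ β ∨ g ∈ γ) :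
    (Bfin ends e f β γ).filter (fun d =>
        Finsupp.equivFunOnFinite.symm (indic β) +
        Finsupp.equivFunOnFinite.symm (indic γ) +
        Finsupp.equivFunOnFinite.symm d = Finsupp.equivFunOnFinite.symm lam) = ∅ := by
  rw [Finset.eq_empty_iff_forall_notMem]
  intro d hd
  rw [Finset.mem_filter, mem_Bfin, indic3_sum_iff] at hd
  obtain ⟨⟨α, α', h1, h2, h3, rfl⟩, hcond⟩ := hd
  have hcg := hcond g
  rw [hlam] at hcg
  have hdg : indic α g + indic α' g = 0 := by
    rcases hg with hg | hg
    · rw [indic_eq_zero_of_not_mem (fun hgα => Finset.disjoint_left.1 h1.2.2.1 hgα hg),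
        indic_eq_zero_of_not_mem (fun hgα => Finset.disjoint_left.1 h2.2.2.1 hgα hg)]
    · rw [indic_eq_zero_of_not_mem (fun hgα => Finset.disjoint_left.1 h1.2.2.2.1 hgα hg),
        indic_eq_zero_of_not_mem (fun hgα => Finset.disjoint_left.1 h2.2.2.2.1 hgα hg)]
  have h1' := indic_le_one β g
  have h2' := indic_le_one γ g
  have hb : ¬ (indic β g = 1 ∧ indic γ g = 1) := by
    rintro ⟨hb1, hb2⟩
    exact Finset.disjoint_left.1 hβγ (indic_eq_one_iff.1 hb1) (indic_eq_one_iff.1 hb2)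
  simp only [Pi.add_apply] at hcg
  omega

open scoped Classical in
lemma Bfin_card_contract {ends : E → Sym2 V} {e f g : E} (hge : e ≠ g) (hgf : f ≠ g)
    {β γ : Finset E} (hβ : g ∉ β) (hγ : g ∉ γ)
    {lam : E → ℕ} (hlam : lam g = 2) :
    ((Bfin ends e f β γ).filter (fun d =>
        Finsupp.equivFunOnFinite.symm (indic β) +
        Finsupp.equivFunOnFinite.symm (indic γ) +
        Finsupp.equivFunOnFinite.symm d = Finsupp.equivFunOnFinite.symm lam)).card =
      ((Bfin (cends ends g) ⟨e, hge⟩ ⟨f, hgf⟩ (edown g β) (edown g γ)).filter (fun d' =>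
        Finsupp.equivFunOnFinite.symm (indic (edown g β)) +
        Finsupp.equivFunOnFinite.symm (indic (edown g γ)) +
        Finsupp.equivFunOnFinite.symm d' =
          Finsupp.equivFunOnFinite.symm
            (fun h : {h : E // h ≠ g} => lam h.1))).card := by
  refine Finset.card_nbij' (fun d => fun h' => d h'.1)
    (fun d' => fun h => if hh : h = g then 2 else d' ⟨h, hh⟩) ?_ ?_ ?_ ?_
  · intro d hd
    rw [Finset.mem_coe, Finset.mem_filter, mem_Bfin, indic3_sum_iff] at hd
    obtain ⟨⟨α, α', h1, h2, h3, rfl⟩, hcond⟩ := hd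
    have hcg := hcond g
    rw [hlam, indic_eq_zero_of_not_mem hβ, indic_eq_zero_of_not_mem hγ] at hcg
    simp only [Pi.add_apply] at hcg
    have hα : g ∈ α := by
      have := indic_le_one α g; have := indic_le_one α' g
      rw [← indic_eq_one_iff]; omega
    have hα' : g ∈ α' := by
      have := indic_le_one α g; have := indic_le_one α' g
      rw [← indic_eq_one_iff]; omega
    rw [Finset.mem_coe, Finset.mem_filter, mem_Bfin, indic3_sum_iff]
    constructor
    · refine ⟨edown g α, edown g α', ?_, ?_, ?_, ?_⟩
      · exact (compatible_iff_contract hge hgf hβ hγ hα).1 h1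
      · exact (compatible_iff_contract hge hgf hβ hγ hα').1 h2
      · rw [← edown_inter]
        exact (compatible_iff_contract hge hgf hβ hγ
          (Finset.mem_inter.mpr ⟨hα, hα'⟩)).1 h3
      · funext h'
        simp only [Pi.add_apply, indic_edown]
    · intro h'
      rw [indic_edown, indic_edown]
      exact hcond h'.1
  · intro d' hd'
    rw [Finset.mem_coe, Finset.mem_filter, mem_Bfin, indic3_sum_iff] at hd'
    obtain ⟨⟨α₁', α₂', h1, h2, h3, rfl⟩, hcond⟩ := hd'
    rw [Finset.mem_coe, Finset.mem_filter, mem_Bfin, indic3_sum_iff]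
    have hd1 : edown g (insert g (eup α₁')) = α₁' := edown_insert_eup _
    have hd2 : edown g (insert g (eup α₂')) = α₂' := edown_insert_eup _
    have hdi : edown g (insert g (eup α₁') ∩ insert g (eup α₂')) = α₁' ∩ α₂' := by
      rw [edown_inter, hd1, hd2]
    constructor
    · refine ⟨insert g (eup α₁'), insert g (eup α₂'), ?_, ?_, ?_, ?_⟩
      · exact (compatible_iff_contract hge hgf hβ hγ (Finset.mem_insert_self _ _)).2
          (by rw [hd1]; exact h1)
      · exact (compatible_iff_contract hge hgf hβ hγ (Finset.mem_insert_self _ _)).2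
          (by rw [hd2]; exact h2)
      · refine (compatible_iff_contract hge hgf hβ hγ
          (Finset.mem_inter.mpr ⟨Finset.mem_insert_self _ _, Finset.mem_insert_self _ _⟩)).2
          (by rw [hdi]; exact h3)
      · funext h
        by_cases hh : h = g
        · subst hh
          simp [indic_apply]
        · simp only [Pi.add_apply, dif_neg hh]
          have e1 : indic (insert g (eup α₁')) h = indic α₁' ⟨h, hh⟩ := by
            simp [indic_apply, hh]
          have e2 : indic (insert g (eup α₂')) h = indic α₂' ⟨h, hh⟩ := by
            simp [indic_apply, hh]
          rw [e1, e2]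
    · intro h
      by_cases hh : h = g
      · subst hh
        simp only [dif_pos rfl, hlam, indic_eq_zero_of_not_mem hβ,
          indic_eq_zero_of_not_mem hγ]
        simp
      · simp only [dif_neg hh]
        have e1 : indic β h = indic (edown g β) ⟨h, hh⟩ :=
          (indic_edown (g := g) β ⟨h, hh⟩).symm
        have e2 : indic γ h = indic (edown g γ) ⟨h, hh⟩ :=
          (indic_edown (g := g) γ ⟨h, hh⟩).symm
        rw [e1, e2]
        exact hcond ⟨h, hh⟩
  · intro d hd
    rw [Finset.mem_coe, Finset.mem_filter, indic3_sum_iff] at hd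
    have hcg := hd.2 g
    rw [hlam, indic_eq_zero_of_not_mem hβ, indic_eq_zero_of_not_mem hγ] at hcg
    funext h
    by_cases hh : h = g
    · subst hh; simp only [dif_pos rfl]; simp; omega
    · simp only [dif_neg hh]
  · intro d' _
    funext h'
    simp only [dif_neg h'.2]

end STransfer
section SFinal

set_option linter.unusedSectionVars false
set_option maxHeartbeats 1000000

variable {V E : Type*} [DecidableEq E] [Fintype E]

lemma mem_Eef_iff {e f h : E} : h ∈ Eef e f ↔ h ≠ e ∧ h ≠ f := by
  simp [Eef]

lemma edown_subset_Eef {g e f : E} (hge : g ≠ e) (hgf : g ≠ f) {β : Finset E}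
    (hβ : β ⊆ Eef e f) :
    edown g β ⊆ Eef (⟨e, hge.symm⟩ : {h : E // h ≠ g}) ⟨f, hgf.symm⟩ := by
  intro h' hh'
  rw [mem_edown] at hh'
  have := mem_Eef_iff.1 (hβ hh')
  rw [mem_Eef_iff]
  exact ⟨by simp [Subtype.ext_iff, this.1], by simp [Subtype.ext_iff, this.2]⟩

lemma eup_subset_Eef {g e f : E} (hge : g ≠ e) (hgf : g ≠ f)
    {β' : Finset {h : E // h ≠ g}}
    (hβ : β' ⊆ Eef (⟨e, hge.symm⟩ : {h : E // h ≠ g}) ⟨f, hgf.symm⟩) :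
    eup β' ⊆ Eef e f := by
  intro h hh
  rw [mem_eup] at hh
  obtain ⟨hne, hmem⟩ := hh
  have := mem_Eef_iff.1 (hβ hmem)
  rw [mem_Eef_iff]
  simp only [ne_eq, Subtype.ext_iff] at this
  exact this

lemma g_not_mem_eup {g : E} (β' : Finset {h : E // h ≠ g}) : g ∉ eup β' := by
  rw [mem_eup]
  rintro ⟨hne, -⟩
  exact hne rfl

open scoped Classical in
lemma ssum_contract (ends : E → Sym2 V) (e f : E) (g : E) (hge : g ≠ e) (hgf : g ≠ f)
    (lam : E → ℕ) (hlam : lam g = 2) :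
    MvPolynomial.coeff (Finsupp.equivFunOnFinite.symm lam) (Ssum ends e f) =
      MvPolynomial.coeff
        (Finsupp.equivFunOnFinite.symm fun h : {h : E // h ≠ g} => lam h.1)
        (Ssum (cends ends g) ⟨e, hge.symm⟩ ⟨f, hgf.symm⟩) := by
  rw [coeff_Ssum, coeff_Ssum]
  rw [← Finset.sum_subset
    (Finset.filter_subset (fun p : Finset E × Finset E => g ∉ p.1 ∧ g ∉ p.2) _)
    (by
      rintro ⟨β, γ⟩ hp hp'
      simp only [Finset.mem_filter, Finset.mem_univ, true_and] at hp hp'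
      have hg : g ∈ β ∨ g ∈ γ := by
        by_contra hc
        push_neg at hc
        exact hp' ⟨hp, hc⟩
      rw [Bfin_filter_empty hlam hp.2.2 hg]
      simp)]
  refine Finset.sum_nbij' (fun p => (edown g p.1, edown g p.2))
    (fun p => (eup p.1, eup p.2)) ?_ ?_ ?_ ?_ ?_
  · rintro ⟨β, γ⟩ hp
    simp only [Finset.mem_filter, Finset.mem_univ, true_and] at hp ⊢
    obtain ⟨⟨h1, h2, h3⟩, h4, h5⟩ := hp
    exact ⟨edown_subset_Eef hge hgf h1, edown_subset_Eef hge hgf h2,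
      (edown_disjoint_iff h5).1 h3⟩
  · rintro ⟨β', γ'⟩ hp
    simp only [Finset.mem_filter, Finset.mem_univ, true_and] at hp ⊢
    obtain ⟨h1, h2, h3⟩ := hp
    refine ⟨⟨eup_subset_Eef hge hgf h1, eup_subset_Eef hge hgf h2, ?_⟩,
      g_not_mem_eup _, g_not_mem_eup _⟩
    rw [edown_disjoint_iff (g_not_mem_eup γ'), edown_eup, edown_eup]
    exact h3
  · rintro ⟨β, γ⟩ hp
    simp only [Finset.mem_filter, Finset.mem_univ, true_and] at hp
    simp only [Prod.mk.injEq]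
    exact ⟨eup_edown hp.2.1, eup_edown hp.2.2⟩
  · rintro ⟨β', γ'⟩ _
    simp only [Prod.mk.injEq]
    exact ⟨edown_eup _, edown_eup _⟩
  · rintro ⟨β, γ⟩ hp
    simp only [Finset.mem_filter, Finset.mem_univ, true_and] at hp
    have := Bfin_card_contract (ends := ends) (e := e) (f := f)
      hge.symm hgf.symm hp.2.1 hp.2.2 hlam
    exact_mod_cast congrArg (Nat.cast : ℕ → ℤ) this

end SFinal
/-- contracting an edge `g ∈ E^{ef}` that is not parallel to `e` nor to
`f` preserves the coefficient of any monomial `x^λ` with `λ(g) = 2`, both in `D` and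
in `S`. -/
theorem stmt10 {V E : Type*} [Fintype V] [Fintype E] [DecidableEq E]
    (ends : E → Sym2 V) (e f : E) (hef : e ≠ f)
    (g : E) (hge : g ≠ e) (hgf : g ≠ f)
    (hpe : ends g ≠ ends e) (hpf : ends g ≠ ends f)
    (lam : E → ℕ) (hlam : lam g = 2) :
    monCoeff (Dpoly ends e f) (Finsupp.equivFunOnFinite.symm lam) =
      monCoeff
        (Dpoly
          (fun h : {h : E // h ≠ g} =>
            Sym2.map (Quot.mk fun a b : V => ends g = s(a, b)) (ends h.1))
          ⟨e, hge.symm⟩ ⟨f, hgf.symm⟩)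
        (Finsupp.equivFunOnFinite.symm fun h : {h : E // h ≠ g} => lam h.1) ∧
    MvPolynomial.coeff (Finsupp.equivFunOnFinite.symm lam) (Ssum ends e f) =
      MvPolynomial.coeff
        (Finsupp.equivFunOnFinite.symm fun h : {h : E // h ≠ g} => lam h.1)
        (Ssum
          (fun h : {h : E // h ≠ g} =>
            Sym2.map (Quot.mk fun a b : V => ends g = s(a, b)) (ends h.1))
          ⟨e, hge.symm⟩ ⟨f, hgf.symm⟩) := by
  exact ⟨dpoly_contract ends e f g hge hgf lam hlam,
    ssum_contract ends e f g hge hgf lam hlam⟩
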